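/- Let P ∈ ℝ^{n_1×⋯×n_m} be an entrywise nonnegative tensor with ||P||_1 = 1, let r_k ∈ Δ^{n_k} for k = 1,…,m, and let ε > 0. If for every k ∈ {1,…,m} one has || r_k(P) − (⟨r_k, r_k(P)⟩ / ||r_k||_2²) · r_k ||_1 < ε / (2m), then Σ_{k=1}^m ||r_k(P) − r_k||_1 ≤ ε. -/

import Mathlib

open Finset

namespace MOT

/-- The index set of a tensor with mode sizes `n 0, …, n (m-1)`. -/
abbrev Idx {m : ℕ} (n : Fin m → ℕ) := ∀ k : Fin m, Fin (n k)

/-- A real tensor of order `m` with mode sizes `n k`. -/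
abbrev Tensor {m : ℕ} (n : Fin m → ℕ) := Idx n → ℝ

/-- The `k`-th marginal of a tensor: `(r_k(X))_j = ∑_{I : i_k = j} X_I`. -/
noncomputable def marginal {m : ℕ} {n : Fin m → ℕ} (X : Tensor n) (k : Fin m)
    (j : Fin (n k)) : ℝ :=
  ∑ I : Idx n, if I k = j then X I else 0

/-- The entrywise ℓ¹-norm of a tensor. -/
noncomputable def tnorm1 {m : ℕ} {n : Fin m → ℕ} (X : Tensor n) : ℝ :=
  ∑ I : Idx n, |X I|

/-- The uniform norm (maximum absolute entry) of a real-valued family. -/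
noncomputable def supAbs {ι : Type*} (X : ι → ℝ) : ℝ := ⨆ i, |X i|

/-- The ℓ¹-norm of a vector. -/
noncomputable def vnorm1 {N : ℕ} (v : Fin N → ℝ) : ℝ := ∑ j, |v j|

/-- The Euclidean norm of a vector. -/
noncomputable def vnorm2 {N : ℕ} (v : Fin N → ℝ) : ℝ := Real.sqrt (∑ j, v j ^ 2)

/-- The Euclidean inner product of two vectors. -/
noncomputable def vinner {N : ℕ} (v w : Fin N → ℝ) : ℝ := ∑ j, v j * w j

/-- `v ∈ Δ^N`: entrywise strictly positive with entries summing to 1. -/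
def IsSimplex {N : ℕ} (v : Fin N → ℝ) : Prop := (∀ j, 0 < v j) ∧ ∑ j, v j = 1

/-- `P ∈ B(r_1,…,r_m)`: entrywise nonnegative with prescribed marginals. -/
def Feasible {m : ℕ} {n : Fin m → ℕ} (r : ∀ k : Fin m, Fin (n k) → ℝ)
    (P : Tensor n) : Prop :=
  (∀ I, 0 ≤ P I) ∧ ∀ k j, marginal P k j = r k j

/-- The entropy `H(P) = -∑_I P_I log P_I` (with `0 · log 0 = 0`). -/
noncomputable def entropy {m : ℕ} {n : Fin m → ℕ} (P : Tensor n) : ℝ :=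
  -∑ I : Idx n, P I * Real.log (P I)

/-- The inner product `⟨X, Y⟩ = ∑_I X_I Y_I` of two tensors. -/
noncomputable def tinner {m : ℕ} {n : Fin m → ℕ} (X Y : Tensor n) : ℝ :=
  ∑ I : Idx n, X I * Y I

/-- The entropic transport cost `V_C^η(P) = ⟨C, P⟩ − η H(P)`. -/
noncomputable def entCost {m : ℕ} {n : Fin m → ℕ} (C : Tensor n) (η : ℝ)
    (P : Tensor n) : ℝ :=
  tinner C P - η * entropy P

/-- `P` is a positive diagonal scaling of `K`. -/
def IsScaling {m : ℕ} {n : Fin m → ℕ} (K P : Tensor n) : Prop :=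
  ∃ β : ∀ k : Fin m, Fin (n k) → ℝ, ∀ I, P I = K I * ∏ k, Real.exp (β k (I k))

end MOT

/-!
Write `v = r_k(P)` and `c = ⟨r_k, v⟩ / ‖r_k‖₂²`. Since `‖P‖₁ = 1` and `P ≥ 0`, both `v` and `r_k` sum
to `1`, so `|1 - c| = |∑_j (v_j - c r_{k,j})| ≤ ‖v - c r_k‖₁`, and hence
`‖v - r_k‖₁ ≤ ‖v - c r_k‖₁ + |1 - c| ‖r_k‖₁ ≤ 2 ‖v - c r_k‖₁ < ε / m`. Summing over the `m` modes gives `ε`.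
The particular value of `c` plays no role.
-/

namespace MOT

theorem sum_marginal {m : ℕ} {n : Fin m → ℕ} (X : Tensor n) (k : Fin m) :
    ∑ j, marginal X k j = ∑ I, X I := by
  simp only [marginal]
  rw [Finset.sum_comm]
  simp

theorem tnorm1_of_nonneg {m : ℕ} {n : Fin m → ℕ} {X : Tensor n} (hX : ∀ I, 0 ≤ X I) :
    tnorm1 X = ∑ I, X I :=
  Finset.sum_congr rfl fun I _ => abs_of_nonneg (hX I)

section Vectors

variable {N : ℕ} {v r : Fin N → ℝ}

theorem abs_one_sub_le_vnorm1_sub_smul (hv : ∑ j, v j = 1) (hr : ∑ j, r j = 1) (c : ℝ) :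
    |1 - c| ≤ vnorm1 (fun j => v j - c * r j) := by
  have hsum : 1 - c = ∑ j, (v j - c * r j) := by
    rw [Finset.sum_sub_distrib, hv, ← Finset.mul_sum, hr, mul_one]
  rw [hsum]
  exact Finset.abs_sum_le_sum_abs _ _

theorem vnorm1_sub_le_vnorm1_sub_smul_add (hr0 : ∀ j, 0 ≤ r j) (hr : ∑ j, r j = 1) (c : ℝ) :
    vnorm1 (fun j => v j - r j) ≤ vnorm1 (fun j => v j - c * r j) + |1 - c| :=
  calc ∑ j, |v j - r j| ≤ ∑ j, (|v j - c * r j| + |1 - c| * r j) := by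
        refine Finset.sum_le_sum fun j _ => ?_
        calc |v j - r j| = |(v j - c * r j) + (c - 1) * r j| := by congr 1; ring
          _ ≤ |v j - c * r j| + |(c - 1) * r j| := abs_add_le _ _
          _ = |v j - c * r j| + |1 - c| * r j := by
            rw [abs_mul, abs_of_nonneg (hr0 j), abs_sub_comm c 1]
    _ = ∑ j, |v j - c * r j| + |1 - c| := by
        rw [Finset.sum_add_distrib, ← Finset.mul_sum, hr, mul_one]

theorem vnorm1_sub_le_two_mul_vnorm1_sub_smul (hv : ∑ j, v j = 1) (hr0 : ∀ j, 0 ≤ r j)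
    (hr : ∑ j, r j = 1) (c : ℝ) :
    vnorm1 (fun j => v j - r j) ≤ 2 * vnorm1 (fun j => v j - c * r j) := by
  linarith [vnorm1_sub_le_vnorm1_sub_smul_add (v := v) hr0 hr c,
    abs_one_sub_le_vnorm1_sub_smul hv hr c]

end Vectors

theorem friedland_criterion_implies_stopping_general
    {m : ℕ} (hm : 2 ≤ m) {n : Fin m → ℕ}
    (P : Tensor n) (hP : ∀ I, 0 ≤ P I) (hP1 : tnorm1 P = 1)
    (r : ∀ k : Fin m, Fin (n k) → ℝ) (hr : ∀ k, IsSimplex (r k))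
    (ε : ℝ)
    (h : ∀ k : Fin m,
      vnorm1 (fun j => marginal P k j -
        (vinner (r k) (fun j' => marginal P k j') / (vnorm2 (r k)) ^ 2) * r k j)
      < ε / (2 * m)) :
    ∑ k, vnorm1 (fun j => marginal P k j - r k j) ≤ ε := by
  have hmarginal : ∀ k, ∑ j, marginal P k j = 1 := fun k => by
    rw [sum_marginal, ← tnorm1_of_nonneg hP, hP1]
  have hmode : ∀ k, vnorm1 (fun j => marginal P k j - r k j) ≤ ε / m := fun k =>
    calc _ ≤ 2 * vnorm1 (fun j => marginal P k j -
            (vinner (r k) (fun j' => marginal P k j') / (vnorm2 (r k)) ^ 2) * r k j) :=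
          vnorm1_sub_le_two_mul_vnorm1_sub_smul (hmarginal k) (fun j => ((hr k).1 j).le) (hr k).2 _
      _ ≤ 2 * (ε / (2 * m)) := by gcongr; exact (h k).le
      _ = ε / m := by ring
  have hm0 : (m : ℝ) ≠ 0 := Nat.cast_ne_zero.2 (by omega)
  calc ∑ k, vnorm1 (fun j => marginal P k j - r k j) ≤ ∑ _k : Fin m, ε / m :=
        Finset.sum_le_sum fun k _ => hmode k
    _ = ε := by
        rw [Finset.sum_const, Finset.card_univ, Fintype.card_fin, nsmul_eq_mul,
          mul_div_cancel₀ _ hm0]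

/-- last claim of Theorem `thm:SinkhornStops`: if for every `k`
`‖ r_k(P) − (⟨r_k, r_k(P)⟩/‖r_k‖₂²) r_k ‖₁ < ε/(2m)` and `‖P‖₁ = 1`,
then `∑_k ‖r_k(P) − r_k‖₁ ≤ ε`. -/
theorem friedland_criterion_implies_stopping
    {m : ℕ} (hm : 2 ≤ m) {n : Fin m → ℕ}
    (P : Tensor n) (hP : ∀ I, 0 ≤ P I) (hP1 : tnorm1 P = 1)
    (r : ∀ k : Fin m, Fin (n k) → ℝ) (hr : ∀ k, IsSimplex (r k))
    (ε : ℝ) (hε : 0 < ε)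
    (h : ∀ k : Fin m,
      vnorm1 (fun j => marginal P k j -
        (vinner (r k) (fun j' => marginal P k j') / (vnorm2 (r k)) ^ 2) * r k j)
      < ε / (2 * m)) :
    ∑ k, vnorm1 (fun j => marginal P k j - r k j) ≤ ε :=
  friedland_criterion_implies_stopping_general hm P hP hP1 r hr ε h

end MOT
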